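/- arXiv:2506.16809 — 6 statements merged into one kernel-verified Lean document; each statement's English description precedes it below -/
import Mathlib

section
/- Let α > 0 and consider the 3-stage Runge–Kutta tableau with weights b(α) = (1/(24α²), 1 − 1/(12α²), 1/(24α²)) and coefficient matrix A(α) whose rows are (−3α/4 + 1/(16α) + 1/(48α²), 1/2 − 1/(24α²), −α/4 − 1/(16α) + 1/(48α²)), (1/(16α) + 1/(48α²), 1/2 − 1/(24α²), −1/(16α) + 1/(48α²)), and (α/4 + 1/(16α) + 1/(48α²), 1/2 − 1/(24α²), 3α/4 − 1/(16α) + 1/(48α²)). Then the symplecticity condition b(α)_i · A(α)_{ij} + b(α)_j · A(α)_{ji} − b(α)_i · b(α)_j = 0 holds for all i, j ∈ {1,2,3} if and only if α = √3/6. -/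
/-- Coefficient matrix `A(α)` of the 3-stage method AMDMP4_C2. -/
noncomputable def AMDMP4A (α : ℝ) : Fin 3 → Fin 3 → ℝ :=
  ![![-3*α/4 + 1/(16*α) + 1/(48*α^2), 1/2 - 1/(24*α^2), -α/4 - 1/(16*α) + 1/(48*α^2)],
    ![1/(16*α) + 1/(48*α^2),          1/2 - 1/(24*α^2), -1/(16*α) + 1/(48*α^2)],
    ![α/4 + 1/(16*α) + 1/(48*α^2),    1/2 - 1/(24*α^2), 3*α/4 - 1/(16*α) + 1/(48*α^2)]]

/-- Weights `b(α)` of the 3-stage method AMDMP4_C2. -/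
noncomputable def AMDMP4b (α : ℝ) : Fin 3 → ℝ :=
  ![1/(24*α^2), 1 - 1/(12*α^2), 1/(24*α^2)]

/-!
The symplecticity defect `b i * a i j + b j * a j i - b i * b j` of the tableau is
`(12 α² - 1) / (192 α³)` times a fixed nonzero integer matrix, so it vanishes exactly when
`α² = 1/12`.
-/

def symplecticDefect {s : ℕ} (A : Fin s → Fin s → ℝ) (b : Fin s → ℝ) (i j : Fin s) : ℝ :=
  b i * A i j + b j * A j i - b i * b j

theorem symplecticDefect_AMDMP4 {α : ℝ} (hα : α ≠ 0) (i j : Fin 3) :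
    symplecticDefect (AMDMP4A α) (AMDMP4b α) i j =
      (12 * α ^ 2 - 1) / (192 * α ^ 3) * ![![-1, 1, 0], ![1, 0, -1], ![0, -1, 1]] i j := by
  fin_cases i <;> fin_cases j <;>
    simp [symplecticDefect, AMDMP4A, AMDMP4b] <;> field_simp <;> ring

theorem twelve_mul_sq_eq_one_iff {α : ℝ} (hα : 0 < α) : 12 * α ^ 2 = 1 ↔ α = √3 / 6 := by
  have h36 : √3 / 6 = √(1 / 12) := by
    rw [show (1 / 12 : ℝ) = 3 / 6 ^ 2 by norm_num, Real.sqrt_div' _ (by norm_num : (0:ℝ) ≤ 6 ^ 2),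
      Real.sqrt_sq (by norm_num)]
  rw [h36, eq_comm (a := α), Real.sqrt_eq_iff_eq_sq (by norm_num) hα.le]
  constructor <;> intro h <;> linarith

theorem stmt0 (α : ℝ) (hα : 0 < α) :
    (∀ i j : Fin 3,
        AMDMP4b α i * AMDMP4A α i j + AMDMP4b α j * AMDMP4A α j i
          - AMDMP4b α i * AMDMP4b α j = 0)
      ↔ α = Real.sqrt 3 / 6 := by
  change (∀ i j, symplecticDefect (AMDMP4A α) (AMDMP4b α) i j = 0) ↔ _
  simp only [symplecticDefect_AMDMP4 hα.ne']
  rw [← twelve_mul_sq_eq_one_iff hα]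
  have hden : (192 * α ^ 3) ≠ 0 := by positivity
  constructor
  · intro h
    have h00 := h 0 0
    simp only [Matrix.cons_val_zero, mul_neg, mul_one, neg_eq_zero, div_eq_zero_iff, hden,
      or_false] at h00
    linarith
  · intro h i j
    rw [show 12 * α ^ 2 - 1 = 0 by linarith, zero_div, zero_mul]
end

section
/- For α = √3/6, the 3-stage tableau with coefficient matrix A(α) whose rows are (−3α/4 + 1/(16α) + 1/(48α²), 1/2 − 1/(24α²), −α/4 − 1/(16α) + 1/(48α²)), (1/(16α) + 1/(48α²), 1/2 − 1/(24α²), −1/(16α) + 1/(48α²)), (α/4 + 1/(16α) + 1/(48α²), 1/2 − 1/(24α²), 3α/4 − 1/(16α) + 1/(48α²)) and weights b(α) = (1/(24α²), 1 − 1/(12α²), 1/(24α²)) has vanishing second column of A(α) and vanishing second weight, i.e. A(√3/6)_{i2} = 0 for i = 1,2,3 and b(√3/6)_2 = 0; moreover the reduced 2-stage tableau obtained by deleting the second row and second column of A(√3/6) and the second entry of b(√3/6) equals the Gauss–Legendre tableau of order 4: coefficient matrix [[1/4, 1/4 − √3/6], [1/4 + √3/6, 1/4]] and weights (1/2, 1/2).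 -/
/-- Coefficient matrix of the 2-stage Gauss–Legendre method of order 4. -/
noncomputable def gaussA : Fin 2 → Fin 2 → ℝ :=
  ![![1/4, 1/4 - Real.sqrt 3/6], ![1/4 + Real.sqrt 3/6, 1/4]]

/-- Index embedding deleting the second stage (stages 1 and 3 remain). -/
def reduceIdx : Fin 2 → Fin 3 := ![0, 2]

theorem stmt1 :
    (∀ i : Fin 3, AMDMP4A (Real.sqrt 3 / 6) i 1 = 0) ∧
    AMDMP4b (Real.sqrt 3 / 6) 1 = 0 ∧
    (∀ i j : Fin 2,
        AMDMP4A (Real.sqrt 3 / 6) (reduceIdx i) (reduceIdx j) = gaussA i j) ∧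
    (∀ i : Fin 2, AMDMP4b (Real.sqrt 3 / 6) (reduceIdx i) = 1/2) := by
  have hs2 : Real.sqrt 3 ^ 2 = 3 := Real.sq_sqrt (by norm_num)
  have hpos : (0:ℝ) < Real.sqrt 3 := Real.sqrt_pos.mpr (by norm_num)
  have hne : Real.sqrt 3 ≠ 0 := ne_of_gt hpos
  have h1 : (Real.sqrt 3 / 6) ^ 2 = 1 / 12 := by rw [div_pow, hs2]; norm_num
  have h2 : 1 / (16 * (Real.sqrt 3 / 6)) = Real.sqrt 3 / 8 := by
    rw [div_eq_div_iff (by positivity) (by norm_num)]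
    nlinarith [hs2]
  refine ⟨?_, ?_, ?_, ?_⟩
  · intro i
    fin_cases i <;>
      simp [AMDMP4A, Matrix.cons_val_one, Matrix.head_cons, h1] <;> norm_num [Matrix.vecHead, Matrix.vecTail]
  · simp [AMDMP4b, h1]
  · intro i j
    fin_cases i <;> fin_cases j <;>
      simp [AMDMP4A, gaussA, reduceIdx, h1, h2] <;> ring
  · intro i
    fin_cases i <;> simp [AMDMP4b, reduceIdx, h1] <;> norm_num
end

section
/- Let s ≥ 1, let c₁, …, c_s be distinct real numbers, and let b, b₁, b₂ ∈ ℝ^s satisfy the quadrature conditions Σ_i b_i c_i^{k−1} = 1/k, Σ_i (b₁)_i (2c_i)^{k−1} = 1/k, and Σ_i (b₂)_i (2c_i − 1)^{k−1} = 1/k for all k = 1, …, s. Then (b₁ + b₂)/2 = b, i.e. (b₁)_i + (b₂)_i = 2 b_i for every i. -/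
/-- A choose-sum identity: `∑_{m=0}^{j} C(j,m)/(m+1) = (2^{j+1} - 1)/(j+1)` in `ℝ`. -/
lemma choose_div_sum (j : ℕ) :
    ∑ m ∈ Finset.range (j + 1), (j.choose m : ℝ) / (m + 1) = (2 ^ (j + 1) - 1) / (j + 1) := by
  have hj : ((j : ℝ) + 1) ≠ 0 := by positivity
  have key : ∀ m ∈ Finset.range (j + 1),
      (j.choose m : ℝ) / (m + 1) = ((j + 1).choose (m + 1) : ℝ) / (j + 1) := by
    intro m _
    have h := Nat.add_one_mul_choose_eq j m
    have h' : ((j : ℝ) + 1) * (j.choose m : ℝ) = ((j + 1).choose (m + 1) : ℝ) * ((m : ℝ) + 1) := by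
      exact_mod_cast congrArg (Nat.cast : ℕ → ℝ) h
    have hm : ((m : ℝ) + 1) ≠ 0 := by positivity
    field_simp
    linarith [h']
  rw [Finset.sum_congr rfl key, ← Finset.sum_div]
  congr 1
  have h2 : ∑ t ∈ Finset.range (j + 2), ((j + 1).choose t : ℝ) = 2 ^ (j + 1) := by
    exact_mod_cast congrArg (Nat.cast : ℕ → ℝ) (Nat.sum_range_choose (j + 1))
  have h3 : ∑ t ∈ Finset.range (j + 2), ((j + 1).choose t : ℝ)
      = ((j + 1).choose 0 : ℝ) + ∑ m ∈ Finset.range (j + 1), ((j + 1).choose (m + 1) : ℝ) := by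
    rw [Finset.sum_range_succ']
    ring
  simp only [Nat.choose_zero_right, Nat.cast_one] at h3
  linarith [h2, h3.symm]

/-- If a vector has zero moments against all powers `< s` of distinct nodes, it is zero. -/
lemma vand_zero {s : ℕ} (c : Fin s → ℝ) (hc : Function.Injective c) (d : Fin s → ℝ)
    (h : ∀ j : Fin s, ∑ i, d i * c i ^ (j : ℕ) = 0) : d = 0 := by
  set M := Matrix.vandermonde c with hM
  have hdet : IsUnit M.det := by
    rw [isUnit_iff_ne_zero]
    exact Matrix.det_vandermonde_ne_zero_iff.mpr hc
  have hvm : Matrix.vecMul d M = 0 := by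
    funext j
    simpa [Matrix.vecMul, dotProduct, hM, Matrix.vandermonde] using h j
  have := congrArg (fun v => Matrix.vecMul v M⁻¹) hvm
  simpa [Matrix.vecMul_vecMul, Matrix.mul_nonsing_inv M hdet] using this

theorem stmt7 {s : ℕ} (hs : 1 ≤ s) (c : Fin s → ℝ) (hc : Function.Injective c)
    (b b1 b2 : Fin s → ℝ)
    (hb : ∀ k : ℕ, 1 ≤ k → k ≤ s → ∑ i, b i * c i ^ (k - 1) = 1 / (k : ℝ))
    (hb1 : ∀ k : ℕ, 1 ≤ k → k ≤ s → ∑ i, b1 i * (2 * c i) ^ (k - 1) = 1 / (k : ℝ))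
    (hb2 : ∀ k : ℕ, 1 ≤ k → k ≤ s → ∑ i, b2 i * (2 * c i - 1) ^ (k - 1) = 1 / (k : ℝ)) :
    ∀ i, b1 i + b2 i = 2 * b i := by
  have key : (fun i => b1 i + b2 i - 2 * b i) = 0 := by
    apply vand_zero c hc
    intro jf
    set j : ℕ := (jf : ℕ) with hjdef
    have hjs : j < s := jf.2
    have hj1 : ((j : ℝ) + 1) ≠ 0 := by positivity
    -- moments of b
    have Hb : ∑ i, b i * c i ^ j = 1 / ((j : ℝ) + 1) := by
      have := hb (j + 1) (by omega) (by omega)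
      simpa using this
    -- moments of b1
    have Hb1 : ∑ i, b1 i * c i ^ j = 1 / (((j : ℝ) + 1) * 2 ^ j) := by
      have h := hb1 (j + 1) (by omega) (by omega)
      simp only [Nat.add_sub_cancel] at h
      have hexp : ∀ i, b1 i * (2 * c i) ^ j = 2 ^ j * (b1 i * c i ^ j) := by
        intro i; rw [mul_pow]; ring
      rw [Finset.sum_congr rfl (fun i _ => hexp i), ← Finset.mul_sum] at h
      have h2 : (2 : ℝ) ^ j ≠ 0 := by positivity
      push_cast at h
      field_simp at h ⊢
      linarith
    -- moments of b2
    have Hb2 : ∑ i, b2 i * c i ^ j = (2 ^ (j + 1) - 1) / (((j : ℝ) + 1) * 2 ^ j) := by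
      have hmom : ∀ m, m < s → ∑ i, b2 i * (2 * c i - 1) ^ m = 1 / ((m : ℝ) + 1) := by
        intro m hm
        have := hb2 (m + 1) (by omega) (by omega)
        simpa using this
      have hexp : ∀ i, (2:ℝ) ^ j * (b2 i * c i ^ j)
          = ∑ m ∈ Finset.range (j + 1), (j.choose m : ℝ) * (b2 i * (2 * c i - 1) ^ m) := by
        intro i
        have : (2 * c i : ℝ) ^ j = ((2 * c i - 1) + 1) ^ j := by ring_nf
        rw [add_pow] at this
        have h2 : (2:ℝ) ^ j * (b2 i * c i ^ j) = b2 i * (2 * c i) ^ j := by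
          rw [mul_pow]; ring
        rw [h2, this, Finset.mul_sum]
        apply Finset.sum_congr rfl
        intro m _
        ring
      have hsum : (2:ℝ) ^ j * ∑ i, b2 i * c i ^ j
          = ∑ m ∈ Finset.range (j + 1), (j.choose m : ℝ) * (1 / ((m : ℝ) + 1)) := by
        rw [Finset.mul_sum, Finset.sum_congr rfl (fun i _ => hexp i), Finset.sum_comm]
        apply Finset.sum_congr rfl
        intro m hm
        rw [← Finset.mul_sum, hmom m (by simp at hm; omega)]
      have hrhs : ∑ m ∈ Finset.range (j + 1), (j.choose m : ℝ) * (1 / ((m : ℝ) + 1))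
          = (2 ^ (j + 1) - 1) / ((j : ℝ) + 1) := by
        rw [← choose_div_sum j]
        apply Finset.sum_congr rfl
        intro m _
        rw [mul_one_div]
      rw [hrhs] at hsum
      have h2 : (2 : ℝ) ^ j ≠ 0 := by positivity
      field_simp at hsum ⊢
      linarith
    have hsplit : ∑ i, (b1 i + b2 i - 2 * b i) * c i ^ j
        = (∑ i, b1 i * c i ^ j) + (∑ i, b2 i * c i ^ j) - 2 * ∑ i, b i * c i ^ j := by
      rw [Finset.mul_sum, ← Finset.sum_add_distrib, ← Finset.sum_sub_distrib]
      apply Finset.sum_congr rfl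
      intro i _
      ring
    rw [hsplit, Hb, Hb1, Hb2]
    have h2 : (2 : ℝ) ^ j ≠ 0 := by positivity
    field_simp
    ring
  intro i
  have := congrFun key i
  simp at this
  linarith
end

section
/- Let s ≥ 1, let A be a real s×s matrix, let c ∈ ℝ^s with c_i = Σ_j a_{ij} (row sums), assume the c_i are distinct, and let b, b₁, b₂ ∈ ℝ^s satisfy Σ_i b_i c_i^{k−1} = 1/k, Σ_i (b₁)_i (2c_i)^{k−1} = 1/k, Σ_i (b₂)_i (2c_i − 1)^{k−1} = 1/k for k = 1, …, s. Let f : ℝ^n → ℝ^n, y₀ ∈ ℝ^n, h ∈ ℝ, and let Y₁, …, Y_s ∈ ℝ^n satisfy Y_i = y₀ + h·Σ_j a_{ij} f(Y_j). Set y_{1/2} = y₀ + (h/2)·Σ_j (b₁)_j f(Y_j). Then: (i) Y_i = y₀ + (h/2)·Σ_j (2a_{ij}) f(Y_j) for all i, so the Y_i are stages of the method (2A, 2c, b₁) with stepsize h/2 from y₀; (ii) Y_i = y_{1/2} + (h/2)·Σ_j (2a_{ij} − (b₁)_j) f(Y_j) for all i, so the Y_i are stages of the method (2A − 𝟙b₁ᵀ,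 2c − 𝟙, b₂) with stepsize h/2 from y_{1/2}; (iii) y_{1/2} + (h/2)·Σ_j (b₂)_j f(Y_j) = y₀ + h·Σ_j b_j f(Y_j). Hence the composition of the two half-step methods is equivalent to the method (A, c, b). -/
theorem stmt8 {s n : ℕ} (hs : 1 ≤ s) (A : Fin s → Fin s → ℝ) (c : Fin s → ℝ)
    (hcA : ∀ i, c i = ∑ j, A i j) (hcinj : Function.Injective c)
    (b b1 b2 : Fin s → ℝ)
    (hb : ∀ k : ℕ, 1 ≤ k → k ≤ s → ∑ i, b i * c i ^ (k - 1) = 1 / (k : ℝ))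
    (hb1 : ∀ k : ℕ, 1 ≤ k → k ≤ s → ∑ i, b1 i * (2 * c i) ^ (k - 1) = 1 / (k : ℝ))
    (hb2 : ∀ k : ℕ, 1 ≤ k → k ≤ s → ∑ i, b2 i * (2 * c i - 1) ^ (k - 1) = 1 / (k : ℝ))
    (f : (Fin n → ℝ) → (Fin n → ℝ)) (y0 : Fin n → ℝ) (h : ℝ)
    (Y : Fin s → Fin n → ℝ)
    (hY : ∀ i, Y i = y0 + h • ∑ j, A i j • f (Y j))
    (y12 : Fin n → ℝ)
    (hy12 : y12 = y0 + (h/2) • ∑ j, b1 j • f (Y j)) :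
    (∀ i, Y i = y0 + (h/2) • ∑ j, (2 * A i j) • f (Y j)) ∧
    (∀ i, Y i = y12 + (h/2) • ∑ j, (2 * A i j - b1 j) • f (Y j)) ∧
    y12 + (h/2) • ∑ j, b2 j • f (Y j) = y0 + h • ∑ j, b j • f (Y j) := by
  -- Key algebraic fact: b1 + b2 = 2 * b, via uniqueness of quadrature weights
  have key : ∀ j, b1 j + b2 j = 2 * b j := by
    set u : Fin s → ℝ := fun i => b1 i + b2 i - 2 * b i with hu
    have hmom : ∀ k : ℕ, k < s → ∑ i, u i * c i ^ k = 0 := by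
      intro k hk
      have hk1 : 1 ≤ k + 1 := Nat.le_add_left 1 k
      have hks : k + 1 ≤ s := hk
      have hk0 : ((k : ℝ) + 1) ≠ 0 := by positivity
      have h2k : (2 : ℝ) ^ k ≠ 0 := by positivity
      -- b moment
      have hbk : ∑ i, b i * c i ^ k = 1 / ((k : ℝ) + 1) := by
        have := hb (k + 1) hk1 hks
        simpa using this
      -- b1 moment
      have hb1k : ∑ i, b1 i * c i ^ k = 1 / ((k : ℝ) + 1) / 2 ^ k := by
        have h1 := hb1 (k + 1) hk1 hks
        simp only [Nat.add_sub_cancel] at h1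
        have e : ∑ i, b1 i * (2 * c i) ^ k = 2 ^ k * ∑ i, b1 i * c i ^ k := by
          rw [Finset.mul_sum]
          refine Finset.sum_congr rfl fun i _ => ?_
          ring
        rw [e] at h1
        push_cast at h1
        field_simp at h1 ⊢
        linarith
      -- b2 moment
      have hb2k : ∑ i, b2 i * c i ^ k = (2 ^ (k + 1) - 1) / ((k : ℝ) + 1) / 2 ^ k := by
        have e1 : ∀ i, b2 i * (2 * c i) ^ k
            = ∑ m ∈ Finset.range (k + 1), (k.choose m : ℝ) * (b2 i * (2 * c i - 1) ^ m) := by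
          intro i
          have : (2 * c i) ^ k = ((2 * c i - 1) + 1) ^ k := by ring_nf
          rw [this, add_pow]
          rw [Finset.mul_sum]
          refine Finset.sum_congr rfl fun m _ => ?_
          ring
        have e2 : ∑ i, b2 i * (2 * c i) ^ k
            = ∑ m ∈ Finset.range (k + 1), (k.choose m : ℝ) * (∑ i, b2 i * (2 * c i - 1) ^ m) := by
          rw [Finset.sum_congr rfl fun i _ => e1 i, Finset.sum_comm]
          refine Finset.sum_congr rfl fun m _ => ?_
          rw [Finset.mul_sum]
        have e3 : ∀ m ∈ Finset.range (k + 1), (k.choose m : ℝ) * (∑ i, b2 i * (2 * c i - 1) ^ m)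
            = (k.choose m : ℝ) / ((m : ℝ) + 1) := by
          intro m hm
          have hm' : m < k + 1 := Finset.mem_range.mp hm
          have h2 := hb2 (m + 1) (Nat.le_add_left 1 m) (le_trans hm' hks)
          simp only [Nat.add_sub_cancel] at h2
          rw [h2]
          push_cast
          ring
        have e4 : ∀ m ∈ Finset.range (k + 1), (k.choose m : ℝ) / ((m : ℝ) + 1)
            = ((k + 1).choose (m + 1) : ℝ) / ((k : ℝ) + 1) := by
          intro m hm
          have := Nat.add_one_mul_choose_eq k m
          have h' : ((k : ℝ) + 1) * (k.choose m : ℝ) = ((k + 1).choose (m + 1) : ℝ) * ((m : ℝ) + 1) := by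
            exact_mod_cast congrArg (Nat.cast : ℕ → ℝ) this
          have hm0 : ((m : ℝ) + 1) ≠ 0 := by positivity
          field_simp
          linarith
        have e5 : ∑ m ∈ Finset.range (k + 1), ((k + 1).choose (m + 1) : ℝ) = 2 ^ (k + 1) - 1 := by
          have := Nat.sum_range_choose (k + 1)
          have h2' : ∑ m ∈ Finset.range (k + 2), ((k + 1).choose m : ℝ) = 2 ^ (k + 1) := by
            exact_mod_cast congrArg (Nat.cast : ℕ → ℝ) this
          rw [Finset.sum_range_succ'] at h2'
          simp at h2'
          linarith
        have e6 : ∑ i, b2 i * (2 * c i) ^ k = (2 ^ (k + 1) - 1) / ((k : ℝ) + 1) := by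
          calc ∑ i, b2 i * (2 * c i) ^ k
              = ∑ m ∈ Finset.range (k + 1), (k.choose m : ℝ) / ((m : ℝ) + 1) := by
                rw [e2, Finset.sum_congr rfl e3]
            _ = ∑ m ∈ Finset.range (k + 1), ((k + 1).choose (m + 1) : ℝ) / ((k : ℝ) + 1) :=
                Finset.sum_congr rfl e4
            _ = (∑ m ∈ Finset.range (k + 1), ((k + 1).choose (m + 1) : ℝ)) / ((k : ℝ) + 1) := by
                rw [Finset.sum_div]
            _ = (2 ^ (k + 1) - 1) / ((k : ℝ) + 1) := by rw [e5]
        have e7 : ∑ i, b2 i * (2 * c i) ^ k = 2 ^ k * ∑ i, b2 i * c i ^ k := by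
          rw [Finset.mul_sum]
          refine Finset.sum_congr rfl fun i _ => ?_
          ring
        rw [e7] at e6
        field_simp at e6 ⊢
        linarith
      have : ∑ i, u i * c i ^ k
          = (∑ i, b1 i * c i ^ k) + (∑ i, b2 i * c i ^ k) - 2 * ∑ i, b i * c i ^ k := by
        rw [Finset.mul_sum, ← Finset.sum_add_distrib, ← Finset.sum_sub_distrib]
        refine Finset.sum_congr rfl fun i _ => ?_
        simp only [hu]
        ring
      rw [this, hbk, hb1k, hb2k]
      field_simp
      ring
    -- Vandermonde argument
    have hdet : (Matrix.vandermonde c).det ≠ 0 :=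
      Matrix.det_vandermonde_ne_zero_iff.mpr hcinj
    have hunit : IsUnit (Matrix.vandermonde c).det := isUnit_iff_ne_zero.mpr hdet
    have hvm : Matrix.vecMul u (Matrix.vandermonde c) = 0 := by
      funext j
      have := hmom j j.isLt
      simpa [Matrix.vecMul, dotProduct, Matrix.vandermonde] using this
    have hu0 : u = 0 := by
      have := congrArg (fun v => Matrix.vecMul v (Matrix.vandermonde c)⁻¹) hvm
      simp only [Matrix.vecMul_vecMul, Matrix.mul_nonsing_inv _ hunit, Matrix.vecMul_one] at this
      simpa [Matrix.vecMul, dotProduct] using this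
    intro j
    have := congrFun hu0 j
    simp only [hu, Pi.zero_apply] at this
    linarith
  -- Part (i)
  have part1 : ∀ i, Y i = y0 + (h/2) • ∑ j, (2 * A i j) • f (Y j) := by
    intro i
    rw [hY i]
    congr 1
    simp only [mul_smul]
    rw [← Finset.smul_sum, smul_smul]
    norm_num
  refine ⟨part1, ?_, ?_⟩
  -- Part (ii)
  · intro i
    rw [part1 i, hy12, add_assoc]
    congr 1
    rw [← smul_add, ← Finset.sum_add_distrib]
    congr 1
    refine Finset.sum_congr rfl fun j _ => ?_
    rw [← add_smul]
    ring_nf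
  -- Part (iii)
  · rw [hy12, add_assoc]
    congr 1
    rw [← smul_add, ← Finset.sum_add_distrib]
    have e : ∀ j, b1 j • f (Y j) + b2 j • f (Y j) = (2 * b j) • f (Y j) := by
      intro j
      rw [← add_smul, key j]
    rw [Finset.sum_congr rfl fun j _ => e j]
    simp only [mul_smul]
    rw [← Finset.smul_sum, smul_smul]
    norm_num
end

section
/- Let s ≥ 1 and let (A, b) be a symmetric s-stage Runge–Kutta tableau: b_j = b_{s+1−j} and a_{ij} + a_{s+1−i, s+1−j} = b_j for all i, j. Let c_i = Σ_j a_{ij}, assume the c_i are distinct and Σ_i b_i c_i^{k−1} = 1/k for k = 1, …, s, and let b₁, b₂ ∈ ℝ^s be the (unique) vectors satisfying Σ_i (b₁)_i (2c_i)^{k−1} = 1/k and Σ_i (b₂)_i (2c_i − 1)^{k−1} = 1/k for k = 1, …, s. Then (b₁)_i = (b₂)_{s+1−i} for all i = 1, …, s. -/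
/-!
Symmetry of the tableau together with `∑ b = 1` gives `c (rev i) = 1 - c i`, so the nodes
`2 c (rev i)` of the reversed `b₂` are the reflections `1 - x` of the nodes `x = 2 c i - 1` of `b₂`.
The quadrature conditions say that a rule integrates polynomials of degree `< s` exactly over
`[0, 1]`, and this is invariant under `x ↦ 1 - x`; hence the reversed `b₂` satisfies the conditions
defining `b₁`, and the Vandermonde matrix on the distinct nodes `2 c i` makes those weights unique.
-/

open Finset

theorem one_sub_pow_eq_sum {R : Type*} [CommRing R] (y : R) (n : ℕ) :
    (1 - y) ^ n = ∑ m ∈ range (n + 1), (-1) ^ m * (n.choose m : R) * y ^ m := by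
  rw [sub_eq_neg_add, add_pow]
  exact sum_congr rfl fun m _ => by rw [neg_pow, one_pow, mul_one]; ring

theorem sum_neg_one_pow_mul_choose_div (n : ℕ) :
    ∑ m ∈ range (n + 1), (-1 : ℝ) ^ m * n.choose m * (1 / (m + 1)) = 1 / (n + 1) :=
  calc ∑ m ∈ range (n + 1), (-1 : ℝ) ^ m * n.choose m * (1 / (m + 1))
      = ∫ x in (0 : ℝ)..1, ∑ m ∈ range (n + 1), (-1) ^ m * (n.choose m : ℝ) * x ^ m := by
        rw [intervalIntegral.integral_finsetSum fun m _ =>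
          (by fun_prop : Continuous fun x : ℝ => _).intervalIntegrable 0 1]
        simp [integral_pow]
    _ = ∫ x in (0 : ℝ)..1, x ^ n := by
        simp_rw [← one_sub_pow_eq_sum]
        rw [intervalIntegral.integral_comp_sub_left (fun x : ℝ => x ^ n) 1]
        norm_num
    _ = 1 / (n + 1) := by simp [integral_pow]

theorem sum_mul_one_sub_pow_of_moments {ι : Type*} [Fintype ι] {w x : ι → ℝ} {n : ℕ}
    (h : ∀ m ≤ n, ∑ i, w i * x i ^ m = 1 / (m + 1)) :
    ∑ i, w i * (1 - x i) ^ n = 1 / (n + 1) := by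
  simp_rw [one_sub_pow_eq_sum, mul_sum]
  rw [sum_comm, ← sum_neg_one_pow_mul_choose_div]
  refine sum_congr rfl fun m hm => ?_
  rw [← h m (Nat.lt_succ_iff.mp (mem_range.mp hm)), mul_sum]
  exact sum_congr rfl fun i _ => by ring

theorem eq_of_sum_mul_pow_eq {K : Type*} [Field K] {s : ℕ} {x : Fin s → K}
    (hx : Function.Injective x) {w w' : Fin s → K}
    (h : ∀ m < s, ∑ i, w i * x i ^ m = ∑ i, w' i * x i ^ m) : w = w' := by
  have hdet : (Matrix.vandermonde x).det ≠ 0 := Matrix.det_vandermonde_ne_zero_iff.mpr hx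
  refine sub_eq_zero.mp (Matrix.eq_zero_of_vecMul_eq_zero hdet (funext fun j => ?_))
  simp only [Matrix.vecMul, dotProduct, Matrix.vandermonde_apply, Pi.sub_apply, sub_mul,
    sum_sub_distrib, h j j.isLt, sub_self, Pi.zero_apply]

theorem sum_add_sum_rev_eq_of_symmetric {s : ℕ} {A : Fin s → Fin s → ℝ} {b : Fin s → ℝ}
    (hA : ∀ i j, A i j + A i.rev j.rev = b j) (i : Fin s) :
    ∑ j, A i j + ∑ j, A i.rev j = ∑ j, b j := by
  rw [← Fintype.sum_equiv Fin.revPerm (fun j => A i.rev j.rev) _ (fun _ => rfl),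
    ← sum_add_distrib]
  exact sum_congr rfl fun j _ => hA i j

theorem stmt11_general {s : ℕ} (hs : 1 ≤ s) (A : Fin s → Fin s → ℝ) (b : Fin s → ℝ)
    (hAsym : ∀ i j, A i j + A i.rev j.rev = b j)
    (c : Fin s → ℝ) (hc : ∀ i, c i = ∑ j, A i j) (hcinj : Function.Injective c)
    (hb : ∀ k : ℕ, 1 ≤ k → k ≤ s → ∑ i, b i * c i ^ (k - 1) = 1 / (k : ℝ))
    (b1 b2 : Fin s → ℝ)
    (hb1 : ∀ k : ℕ, 1 ≤ k → k ≤ s → ∑ i, b1 i * (2 * c i) ^ (k - 1) = 1 / (k : ℝ))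
    (hb2 : ∀ k : ℕ, 1 ≤ k → k ≤ s → ∑ i, b2 i * (2 * c i - 1) ^ (k - 1) = 1 / (k : ℝ)) :
    ∀ i, b1 i = b2 i.rev := by
  have moments {x w : Fin s → ℝ}
      (h : ∀ k : ℕ, 1 ≤ k → k ≤ s → ∑ i, w i * x i ^ (k - 1) = 1 / (k : ℝ))
      (m : ℕ) (hm : m < s) : ∑ i, w i * x i ^ m = 1 / (m + 1) := by
    simpa using h (m + 1) (by omega) hm
  have hc_rev (i : Fin s) : 2 * c i.rev = 1 - (2 * c i - 1) := by
    have := sum_add_sum_rev_eq_of_symmetric hAsym i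
    rw [← hc, ← hc, (by simpa using hb 1 le_rfl hs : ∑ j, b j = 1)] at this
    linarith
  have hb2_rev (m : ℕ) (hm : m < s) : ∑ i, b2 i.rev * (2 * c i) ^ m = 1 / (m + 1) := by
    rw [Fintype.sum_equiv Fin.revPerm _ (fun i => b2 i * (2 * c i.rev) ^ m) (by simp)]
    simp_rw [hc_rev]
    exact sum_mul_one_sub_pow_of_moments fun l hl => moments hb2 l (by omega)
  have hinj : Function.Injective (fun i => 2 * c i) := fun i j h => hcinj (by simpa using h)
  intro i
  refine congrFun (eq_of_sum_mul_pow_eq (w' := fun i => b2 i.rev) hinj fun m hm => ?_) i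
  rw [moments hb1 m hm, hb2_rev m hm]

theorem stmt11 {s : ℕ} (hs : 1 ≤ s) (A : Fin s → Fin s → ℝ) (b : Fin s → ℝ)
    (hbsym : ∀ j, b j = b j.rev)
    (hAsym : ∀ i j, A i j + A i.rev j.rev = b j)
    (c : Fin s → ℝ) (hc : ∀ i, c i = ∑ j, A i j) (hcinj : Function.Injective c)
    (hb : ∀ k : ℕ, 1 ≤ k → k ≤ s → ∑ i, b i * c i ^ (k - 1) = 1 / (k : ℝ))
    (b1 b2 : Fin s → ℝ)
    (hb1 : ∀ k : ℕ, 1 ≤ k → k ≤ s → ∑ i, b1 i * (2 * c i) ^ (k - 1) = 1 / (k : ℝ))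
    (hb2 : ∀ k : ℕ, 1 ≤ k → k ≤ s → ∑ i, b2 i * (2 * c i - 1) ^ (k - 1) = 1 / (k : ℝ)) :
    ∀ i, b1 i = b2 i.rev :=
  stmt11_general hs A b hAsym c hc hcinj hb b1 b2 hb1 hb2
end

section
/- Let s ≥ 1 and let (A, b) be a symmetric s-stage Runge–Kutta tableau: b_j = b_{s+1−j} and a_{ij} + a_{s+1−i, s+1−j} = b_j for all i, j. Let c_i = Σ_j a_{ij}, assume the c_i are distinct and Σ_i b_i c_i^{k−1} = 1/k for k = 1, …, s, and let b₁, b₂ ∈ ℝ^s satisfy Σ_i (b₁)_i (2c_i)^{k−1} = 1/k and Σ_i (b₂)_i (2c_i − 1)^{k−1} = 1/k for k = 1, …, s. Define A₁ = 2A, c₁ = 2c, and A₂ = 2A − 𝟙b₁ᵀ, c₂ = 2c − 𝟙. Then the tableau (A₂, c₂, b₂) is the adjoint of the tableau (A₁, c₁, b₁): (b₂)_j = (b₁)_{s+1−j}, (A₂)_{ij} = (b₁)_{s+1−j} − (A₁)_{s+1−i, s+1−j} for all i, j, and (c₂)_i = 1 − (c₁)_{s+1−i} for all i. -/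
/-!
Regard `b`, `b₁`, `b₂` as quadrature rules with nodes `c`, `2c`, `2c - 1` that are exact on
`[0, 1]` for polynomials of degree `< s`. Summing the symmetry relation of `A` over `j` gives
`c i + c (rev i) = 1`. The reflection `t ↦ 1 - t` turns `b₁ ∘ rev` into a rule on the nodes
`2c - 1` exact on `[0, 1]`, and the reflection `t ↦ 2 - t` makes `b₁ + b₁ ∘ rev` a rule on the
nodes `2c` exact on `[0, 2]`, as is `2b`. Distinct nodes determine the weights of such a rule
(Vandermonde), so `b₂ = b₁ ∘ rev` and `b₁ + b₁ ∘ rev = 2b`; the latter together with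
`a i j + a (rev i) (rev j) = b j` is the statement about `A₂`.
-/

open Finset Polynomial

def IsExactQuadrature {ι : Type*} [Fintype ι] (n : ℕ) (a b : ℝ) (w x : ι → ℝ) : Prop :=
  ∀ m < n, ∑ i, w i * x i ^ m = ∫ t in a..b, t ^ m

namespace IsExactQuadrature

variable {ι : Type*} [Fintype ι] {n : ℕ} {a b : ℝ} {w x : ι → ℝ}

theorem of_moments (h : ∀ k : ℕ, 1 ≤ k → k ≤ n → ∑ i, w i * x i ^ (k - 1) = 1 / (k : ℝ)) :
    IsExactQuadrature n 0 1 w x := by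
  intro m hm
  simpa [integral_pow] using h (m + 1) (by omega) hm

theorem sum_eq_one (h : IsExactQuadrature n 0 1 w x) (hn : 0 < n) : ∑ i, w i = 1 := by
  simpa using h 0 hn

theorem sum_mul_eval (h : IsExactQuadrature n a b w x) {p : ℝ[X]} (hp : p.natDegree < n) :
    ∑ i, w i * p.eval (x i) = ∫ t in a..b, p.eval t := by
  simp_rw [eval_eq_sum_range' hp, mul_sum]
  rw [sum_comm, intervalIntegral.integral_finsetSum fun k _ =>
    ((continuous_pow k).const_mul _).intervalIntegrable a b]
  refine sum_congr rfl fun k hk => ?_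
  rw [intervalIntegral.integral_const_mul, ← h k (mem_range.1 hk), mul_sum]
  exact sum_congr rfl fun i _ => by ring

theorem reflect (h : IsExactQuadrature n a b w x) (d : ℝ) :
    IsExactQuadrature n (d - b) (d - a) w (fun i => d - x i) := by
  intro m hm
  have hdeg : ((C d - X) ^ m).natDegree < n :=
    (natDegree_pow_le_of_le (m := 1) m ((natDegree_sub_le _ _).trans (by simp))).trans_lt
      (by omega)
  simpa [intervalIntegral.integral_comp_sub_left (fun t => t ^ m)] using h.sum_mul_eval hdeg

theorem comp_equiv {κ : Type*} [Fintype κ] (h : IsExactQuadrature n a b w x) (σ : κ ≃ ι) :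
    IsExactQuadrature n a b (w ∘ σ) (x ∘ σ) := by
  intro m hm
  rw [← h m hm, ← σ.sum_comp]
  rfl

theorem add_adjacent {c : ℝ} {w' : ι → ℝ} (h : IsExactQuadrature n a b w x)
    (h' : IsExactQuadrature n b c w' x) : IsExactQuadrature n a c (w + w') x := by
  intro m hm
  simp only [Pi.add_apply, add_mul, sum_add_distrib, h m hm, h' m hm]
  exact intervalIntegral.integral_add_adjacent_intervals
    ((continuous_pow m).intervalIntegrable a b) ((continuous_pow m).intervalIntegrable b c)

theorem const_mul (h : IsExactQuadrature n a b w x) (r : ℝ) :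
    IsExactQuadrature n (r * a) (r * b) (fun i => r * w i) (fun i => r * x i) := by
  intro m hm
  have hsum : ∑ i, r * w i * (r * x i) ^ m = r ^ (m + 1) * ∑ i, w i * x i ^ m := by
    rw [mul_sum]
    exact sum_congr rfl fun i _ => by ring
  rw [hsum, h m hm, integral_pow, integral_pow]
  ring

theorem weights_eq {w w' x : Fin n → ℝ} (hx : Function.Injective x)
    (h : IsExactQuadrature n a b w x) (h' : IsExactQuadrature n a b w' x) : w = w' := by
  rw [← sub_eq_zero]
  refine Matrix.eq_zero_of_forall_pow_sum_mul_pow_eq_zero hx fun m => ?_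
  simp only [Pi.sub_apply, sub_mul, sum_sub_distrib, h m m.isLt, h' m m.isLt, sub_self]

end IsExactQuadrature

theorem sum_add_sum_rev_eq_sum {M : Type*} [AddCommMonoid M] {s : ℕ} {A : Fin s → Fin s → M}
    {b : Fin s → M} (hA : ∀ i j, A i j + A i.rev j.rev = b j) (i : Fin s) :
    ∑ j, A i j + ∑ j, A i.rev j = ∑ j, b j := by
  rw [← Equiv.sum_comp Fin.revPerm (A i.rev), ← sum_add_distrib]
  exact sum_congr rfl fun j _ => hA i j

theorem stmt12_general {s : ℕ} (A : Fin s → Fin s → ℝ) (b : Fin s → ℝ)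
    (hAsym : ∀ i j, A i j + A i.rev j.rev = b j)
    (c : Fin s → ℝ) (hc : ∀ i, c i = ∑ j, A i j) (hcinj : Function.Injective c)
    (hb : ∀ k : ℕ, 1 ≤ k → k ≤ s → ∑ i, b i * c i ^ (k - 1) = 1 / (k : ℝ))
    (b1 b2 : Fin s → ℝ)
    (hb1 : ∀ k : ℕ, 1 ≤ k → k ≤ s → ∑ i, b1 i * (2 * c i) ^ (k - 1) = 1 / (k : ℝ))
    (hb2 : ∀ k : ℕ, 1 ≤ k → k ≤ s → ∑ i, b2 i * (2 * c i - 1) ^ (k - 1) = 1 / (k : ℝ)) :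
    (∀ j, b2 j = b1 j.rev) ∧
    (∀ i j, 2 * A i j - b1 j = b1 j.rev - 2 * A i.rev j.rev) ∧
    (∀ i, 2 * c i - 1 = 1 - 2 * c i.rev) := by
  have hB := IsExactQuadrature.of_moments hb
  have hB1 := IsExactQuadrature.of_moments hb1
  have hcrev (i : Fin s) : c i + c i.rev = 1 := by
    rw [hc, hc, sum_add_sum_rev_eq_sum hAsym, hB.sum_eq_one i.pos]
  have hB1_refl₁ : IsExactQuadrature s 0 1 (b1 ∘ Fin.revPerm) (fun i => 2 * c i - 1) := by
    convert (hB1.reflect 1).comp_equiv Fin.revPerm using 2 with i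
    all_goals norm_num
    linarith [hcrev i]
  have hB1_refl₂ : IsExactQuadrature s 1 2 (b1 ∘ Fin.revPerm) (fun i => 2 * c i) := by
    convert (hB1.reflect 2).comp_equiv Fin.revPerm using 2 with i
    all_goals norm_num
    linarith [hcrev i]
  have hb2_eq : b2 = b1 ∘ Fin.revPerm :=
    IsExactQuadrature.weights_eq (fun i j h => hcinj (by linarith)) (.of_moments hb2) hB1_refl₁
  have hb1_sym : b1 + b1 ∘ Fin.revPerm = fun j => 2 * b j :=
    IsExactQuadrature.weights_eq (fun i j h => hcinj (by linarith)) (hB1.add_adjacent hB1_refl₂)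
      (by simpa using hB.const_mul 2)
  refine ⟨fun j => congrFun hb2_eq j, fun i j => ?_, fun i => by linarith [hcrev i]⟩
  have hb1_j := congrFun hb1_sym j
  simp only [Pi.add_apply, Function.comp_apply, Fin.revPerm_apply] at hb1_j
  linarith [hAsym i j]

theorem stmt12 {s : ℕ} (hs : 1 ≤ s) (A : Fin s → Fin s → ℝ) (b : Fin s → ℝ)
    (hbsym : ∀ j, b j = b j.rev)
    (hAsym : ∀ i j, A i j + A i.rev j.rev = b j)
    (c : Fin s → ℝ) (hc : ∀ i, c i = ∑ j, A i j) (hcinj : Function.Injective c)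
    (hb : ∀ k : ℕ, 1 ≤ k → k ≤ s → ∑ i, b i * c i ^ (k - 1) = 1 / (k : ℝ))
    (b1 b2 : Fin s → ℝ)
    (hb1 : ∀ k : ℕ, 1 ≤ k → k ≤ s → ∑ i, b1 i * (2 * c i) ^ (k - 1) = 1 / (k : ℝ))
    (hb2 : ∀ k : ℕ, 1 ≤ k → k ≤ s → ∑ i, b2 i * (2 * c i - 1) ^ (k - 1) = 1 / (k : ℝ)) :
    (∀ j, b2 j = b1 j.rev) ∧
    (∀ i j, 2 * A i j - b1 j = b1 j.rev - 2 * A i.rev j.rev) ∧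
    (∀ i, 2 * c i - 1 = 1 - 2 * c i.rev) :=
  stmt12_general A b hAsym c hc hcinj hb b1 b2 hb1 hb2
end
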